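/- If for each point x of a topological space X, player ONE does not have a winning strategy in the sequence-selection game at x (where in inning n ONE plays a sequence S_n converging to x and TWO chooses an infinite subset T_n ⊆ S_n, TWO winning if ⋃_n T_n converges to x), then X is α_{2^-}. -/

import Mathlib

open Filter Topology Set

/-- A countably infinite set converging to `x`: `x` is not in the set, and the set is
cofinitely contained in every neighborhood of `x`. -/
def ConvSeq {X : Type*} [TopologicalSpace X] (S : Set X) (x : X) : Prop :=
  S.Countable ∧ S.Infinite ∧ x ∉ S ∧ ∀ U ∈ nhds x, (S \ U).Finite

/-- A set converges to `x` in the weak sense: all but finitely many of its elements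
are in every neighborhood of `x`. -/
def SetConv {X : Type*} [TopologicalSpace X] (S : Set X) (x : X) : Prop :=
  ∀ U ∈ nhds x, (S \ U).Finite
/-- ONE has a winning strategy in the sequence-selection game at `x`: ONE plays
sequences converging to `x`, TWO responds with infinite subsets, and TWO wins if the
union of his choices converges to `x`. -/
def OneHasWinningStrategy {X : Type*} [TopologicalSpace X] (x : X) : Prop :=
  ∃ σ : List (Set X) → Set X,
    (∀ h, ConvSeq (σ h) x) ∧
    ∀ T : ℕ → Set X,
      (∀ n, T n ⊆ σ (List.ofFn fun i : Fin n => T i) ∧ (T n).Infinite) →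
      ¬ ConvSeq (⋃ n, T n) x

/-!
ONE keeps a set of surviving columns: column `m` survives inning `j` if `a j m` lies in TWO's
answer `T j` or in the kernel of `𝓝 x` (the points lying in every neighbourhood of `x`, which
never obstruct convergence). In inning `n` ONE plays the values of row `n` on the surviving
columns, off the kernel. The survivors stay infinite: either TWO's infinite answer is the image
of infinitely many surviving columns, or row `n` takes only finitely many values off the kernel
there, each on finitely many columns because the row tends to `x`. As this strategy is not
winning, some play has `⋃ T n` converging to `x`, and a diagonal choice of surviving columns
does the job. If no sequence converges to `x` at all, every row lies cofinitely in the kernel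
and the same diagonal argument works with `T n = ∅`.
-/

namespace SetConv

variable {X : Type*} [TopologicalSpace X] {x : X}

theorem mono {S S' : Set X} (h : SetConv S' x) (hS : S ⊆ S') : SetConv S x :=
  fun U hU => (h U hU).subset (sdiff_subset_sdiff_left hS)

theorem image_of_tendsto {ι : Type*} {f : ι → X} (hf : Tendsto f cofinite (𝓝 x)) (s : Set ι) :
    SetConv (f '' s) x := by
  intro U hU
  refine ((hf hU).image f).subset ?_
  rintro _ ⟨⟨i, -, rfl⟩, hiU⟩
  exact ⟨i, hiU, rfl⟩

end SetConv

section Kernel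

variable {X : Type*} [TopologicalSpace X] {x : X}

theorem self_mem_ker_nhds (x : X) : x ∈ (𝓝 x).ker :=
  mem_ker.2 fun _ => mem_of_mem_nhds

theorem compl_mem_nhds_of_finite_of_disjoint_ker {F : Set X} (hF : F.Finite)
    (hFK : Disjoint F (𝓝 x).ker) : Fᶜ ∈ 𝓝 x := by
  rw [← biUnion_of_singleton F, compl_iUnion₂, biInter_mem hF]
  intro y hy
  obtain ⟨U, hU, hyU⟩ : ∃ U ∈ 𝓝 x, y ∉ U := by
    simpa using hFK.notMem_of_mem_left hy
  exact mem_of_superset hU fun z hz (hzy : z = y) => hyU (hzy ▸ hz)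

variable {ι : Type*} {f : ι → X}

theorem convSeq_image_diff_ker [Countable ι] (hf : Tendsto f cofinite (𝓝 x)) {s : Set ι}
    (hs : (f '' s \ (𝓝 x).ker).Infinite) : ConvSeq (f '' s \ (𝓝 x).ker) x :=
  ⟨(s.to_countable.image f).mono sdiff_subset, hs, fun hx => hx.2 (self_mem_ker_nhds x),
    (SetConv.image_of_tendsto hf s).mono sdiff_subset⟩

theorem finite_sep_notMem_ker (hf : Tendsto f cofinite (𝓝 x)) {s : Set ι}
    (hs : (f '' s \ (𝓝 x).ker).Finite) : {i ∈ s | f i ∉ (𝓝 x).ker}.Finite := by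
  have hU := compl_mem_nhds_of_finite_of_disjoint_ker hs disjoint_sdiff_left
  exact (hf hU).subset fun i ⟨his, hi⟩ => not_not_intro ⟨⟨i, his, rfl⟩, hi⟩

theorem infinite_sep_mem_union_ker (hf : Tendsto f cofinite (𝓝 x)) {s : Set ι} (hs : s.Infinite)
    {t : Set X} (ht : (f '' s \ (𝓝 x).ker).Infinite → t ⊆ f '' s \ (𝓝 x).ker ∧ t.Infinite) :
    {i ∈ s | f i ∈ t ∪ (𝓝 x).ker}.Infinite := by
  by_cases hfs : (f '' s \ (𝓝 x).ker).Infinite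
  · obtain ⟨hts, ht⟩ := ht hfs
    refine (ht.mono fun z hz => ?_).of_image f
    obtain ⟨⟨i, his, rfl⟩, -⟩ := hts hz
    exact ⟨i, ⟨his, .inl hz⟩, rfl⟩
  · refine (hs.sdiff (finite_sep_notMem_ker hf (not_infinite.1 hfs))).mono ?_
    rintro i ⟨his, hi⟩
    exact ⟨his, .inr (not_not.1 fun hK => hi ⟨his, hK⟩)⟩

end Kernel

section Game

variable {X : Type*} [TopologicalSpace X] {x : X} {a : ℕ → ℕ → X} {T : ℕ → Set X} {n : ℕ}

def survivors (a : ℕ → ℕ → X) (x : X) (T : ℕ → Set X) (n : ℕ) : Set ℕ :=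
  {m | ∀ j < n, a j m ∈ T j ∪ (𝓝 x).ker}

theorem survivors_zero : survivors a x T 0 = univ := by
  simp [survivors]

theorem survivors_succ :
    survivors a x T (n + 1) = {m ∈ survivors a x T n | a n m ∈ T n ∪ (𝓝 x).ker} := by
  ext m
  simp only [survivors, mem_ofPred_eq, Nat.lt_succ_iff_lt_or_eq, or_imp, forall_and,
    forall_eq]

theorem survivors_congr {T' : ℕ → Set X} (h : ∀ j < n, T j = T' j) :
    survivors a x T n = survivors a x T' n := by
  ext m
  exact forall₂_congr fun j hj => by rw [h j hj]

open scoped Classical in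
/-- When row `n` takes only finitely many values off the kernel on `M`, ONE may play any
legal `C`: the next survivor set then loses only finitely many columns whatever TWO does. -/
noncomputable def onePlay (a : ℕ → ℕ → X) (x : X) (C : Set X) (M : Set ℕ) (n : ℕ) : Set X :=
  if (a n '' M \ (𝓝 x).ker).Infinite then a n '' M \ (𝓝 x).ker else C

noncomputable def oneStrategy (a : ℕ → ℕ → X) (x : X) (C : Set X) (l : List (Set X)) : Set X :=
  onePlay a x C (survivors a x (fun j => l.getD j ∅) l.length) l.length

theorem oneStrategy_ofFn (a : ℕ → ℕ → X) (x : X) (C : Set X) (T : ℕ → Set X) (n : ℕ) :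
    oneStrategy a x C (List.ofFn fun i : Fin n => T i) = onePlay a x C (survivors a x T n) n := by
  rw [oneStrategy, List.length_ofFn, survivors_congr fun j hj => ?_]
  simp [List.getD_eq_getElem?_getD, hj]

theorem convSeq_onePlay {C : Set X} (hC : ConvSeq C x) (ha : Tendsto (a n) cofinite (𝓝 x))
    (M : Set ℕ) : ConvSeq (onePlay a x C M n) x := by
  unfold onePlay
  split_ifs with hM
  exacts [convSeq_image_diff_ker ha hM, hC]

theorem subset_onePlay_iff {C : Set X} {M : Set ℕ} {t : Set X}
    (hM : (a n '' M \ (𝓝 x).ker).Infinite) :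
    t ⊆ onePlay a x C M n ↔ t ⊆ a n '' M \ (𝓝 x).ker := by
  rw [onePlay, if_pos hM]

theorem exists_infinite_survivors_of_not_oneHasWinningStrategy (h : ¬ OneHasWinningStrategy x)
    {C : Set X} (hC : ConvSeq C x) (ha : ∀ n, Tendsto (a n) cofinite (𝓝 x)) :
    ∃ T : ℕ → Set X, SetConv (⋃ n, T n) x ∧ ∀ n, (survivors a x T n).Infinite := by
  simp only [OneHasWinningStrategy, not_exists, not_and, not_forall, not_not] at h
  obtain ⟨T, hT, hTwin⟩ := h (oneStrategy a x C) fun l => convSeq_onePlay hC (ha _) _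
  refine ⟨T, hTwin.2.2.2, fun n => ?_⟩
  induction n with
  | zero => rw [survivors_zero]; exact infinite_univ
  | succ n ih =>
    rw [survivors_succ]
    refine infinite_sep_mem_union_ker (ha n) ih fun hinf => ⟨?_, (hT n).2⟩
    rw [← subset_onePlay_iff hinf, ← oneStrategy_ofFn]
    exact (hT n).1

theorem infinite_survivors_empty (hC : ∀ C, ¬ ConvSeq C x)
    (ha : ∀ n, Tendsto (a n) cofinite (𝓝 x)) (n : ℕ) :
    (survivors a x (fun _ => ∅) n).Infinite := by
  induction n with
  | zero => rw [survivors_zero]; exact infinite_univ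
  | succ n ih =>
    rw [survivors_succ]
    exact infinite_sep_mem_union_ker (ha n) ih fun hinf =>
      (hC _ (convSeq_image_diff_ker (ha n) hinf)).elim

theorem exists_strictMono_setConv_diagonal (hT : SetConv (⋃ n, T n) x)
    (hM : ∀ n, (survivors a x T n).Infinite) :
    ∃ m : ℕ → ℕ, StrictMono m ∧ SetConv {z | ∃ n, ∃ j ≤ n, z = a j (m n)} x := by
  obtain ⟨m, hm, hmM⟩ := extraction_forall_of_frequently fun n =>
    Nat.frequently_atTop_iff_infinite.2 (hM (n + 1))
  refine ⟨m, hm, fun U hU => (hT U hU).subset ?_⟩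
  rintro _ ⟨⟨n, j, hjn, rfl⟩, hzU⟩
  rcases hmM n j (Nat.lt_succ_of_le hjn) with hT | hK
  · exact ⟨mem_iUnion_of_mem j hT, hzU⟩
  · exact (hzU (mem_ker.1 hK U hU)).elim

end Game

/-- If ONE has no winning strategy in the sequence-selection game at each point,
then the space is α₂⁻. -/
theorem no_winning_strategy_implies_alpha2minus {X : Type*} [TopologicalSpace X]
    (h : ∀ x : X, ¬ OneHasWinningStrategy x) :
    ∀ (x : X) (a : ℕ → ℕ → X), (∀ n, Tendsto (a n) atTop (nhds x)) →
      ∃ m : ℕ → ℕ, StrictMono m ∧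
        SetConv {z | ∃ n, ∃ j ≤ n, z = a j (m n)} x := by
  intro x a ha
  replace ha : ∀ n, Tendsto (a n) cofinite (𝓝 x) := by
    simpa only [Nat.cofinite_eq_atTop] using ha
  obtain ⟨T, hT, hM⟩ : ∃ T : ℕ → Set X, SetConv (⋃ n, T n) x ∧
      ∀ n, (survivors a x T n).Infinite := by
    by_cases hC : ∃ C, ConvSeq C x
    · obtain ⟨C, hC⟩ := hC
      exact exists_infinite_survivors_of_not_oneHasWinningStrategy (h x) hC ha
    · exact ⟨fun _ => ∅, by simp [SetConv], infinite_survivors_empty (not_exists.1 hC) ha⟩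
  exact exists_strictMono_setConv_diagonal hT hM
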